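/- arXiv:1811.11999 — 4 statements merged into one kernel-verified Lean document; each statement's English description precedes it below -/
import Mathlib

section
/- Let θ_1 and θ_2 be distinct real numbers. Then the lattice Λ_{θ1,θ2} satisfies ω(Λ_{θ1,θ2}) = (1/2)·max(μ(θ_1), μ(θ_2)) − 1 (with the convention that the right-hand side is +∞ if either irrationality measure is +∞). -/
/-!
For `x = (qθ₁ - p, qθ₂ - p)` the coordinates differ by `q(θ₁ - θ₂)`, so `|x| ≍ |q|` for large `|q|`,
and `Π(x)² = min(|x₀|, |x₁|)·|x|`. Hence `Π(x) ≤ |x|^{-γ}` says, up to constants, that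
`min_i |qθᵢ - p| ≤ |q|^{-(2γ+1)}`, i.e. that `p/q` approximates `θ₁` or `θ₂` to order `2γ + 2`.
The constants are absorbed by giving up an arbitrarily small `δ` in the exponent, and along an
infinite family of such points `|q| → ∞` because `|p| = O(|q|)` there. This gives
`max(μ(θ₁), μ(θ₂)) = 2ω + 2`; the exponents `γ ≤ -1/2` are handled by `μ(θ) ≥ 1` (round `qθ`).
-/

open scoped BigOperators

noncomputable section

/-- The multiplicative function `Π(x) = ∏ i |x_i|^{1/d}`. -/
def Pibar (d : ℕ) (x : Fin d → ℝ) : ℝ := ∏ i, |x i| ^ (1 / (d : ℝ))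

/-- The Diophantine exponent of a lattice `Λ ⊆ ℝ^d` (sup-norm `‖·‖`). -/
def dioExp (d : ℕ) (Λ : Set (Fin d → ℝ)) : EReal :=
  sSup {g : EReal | ∃ γ : ℝ, g = (γ : EReal) ∧
    {x : Fin d → ℝ | x ∈ Λ ∧ Pibar d x ≤ ‖x‖ ^ (-γ)}.Infinite}

/-- The irrationality measure `μ(θ)`. -/
def irrMeasure (θ : ℝ) : EReal :=
  sSup {g : EReal | ∃ γ : ℝ, g = (γ : EReal) ∧
    {zp : ℤ × ℤ | zp.1 ≠ 0 ∧
      |θ - (zp.2 : ℝ) / (zp.1 : ℝ)| ≤ |(zp.1 : ℝ)| ^ (-γ)}.Infinite}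

/-- The lattice `Λ_{θ₁,θ₂} = {(qθ₁ - p, qθ₂ - p) : (q,p) ∈ ℤ²}`. -/
def latticeTheta (θ₁ θ₂ : ℝ) : Set (Fin 2 → ℝ) :=
  {x | ∃ z : ℤ × ℤ, x = ![(z.1 : ℝ) * θ₁ - (z.2 : ℝ), (z.1 : ℝ) * θ₂ - (z.2 : ℝ)]}

open Filter

section FinTwo

variable (x : Fin 2 → ℝ)

lemma norm_fin_two_eq_max : ‖x‖ = max |x 0| |x 1| := by
  apply le_antisymm
  · refine (pi_norm_le_iff_of_nonneg (le_trans (abs_nonneg _) (le_max_left _ _))).2 ?_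
    intro i
    fin_cases i <;> simp [Real.norm_eq_abs]
  · exact max_le ((Real.norm_eq_abs _) ▸ norm_le_pi_norm x 0)
      ((Real.norm_eq_abs _) ▸ norm_le_pi_norm x 1)

lemma abs_mul_abs_eq_min_mul_norm : |x 0| * |x 1| = min |x 0| |x 1| * ‖x‖ := by
  rw [norm_fin_two_eq_max, min_mul_max]

lemma pibar_two_le_rpow_iff (γ : ℝ) :
    Pibar 2 x ≤ ‖x‖ ^ (-γ) ↔ |x 0| * |x 1| ≤ ‖x‖ ^ (-(2 * γ)) := by
  have hsq : ∀ a : ℝ, 0 ≤ a → ∀ y : ℝ, (a ^ y) ^ (2 : ℕ) = a ^ (y * 2) := fun a ha y => by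
    rw [← Real.rpow_natCast (a ^ y) 2, ← Real.rpow_mul ha]
    norm_num
  have hpibar : Pibar 2 x = |x 0| ^ (2 : ℝ)⁻¹ * |x 1| ^ (2 : ℝ)⁻¹ := by
    simp [Pibar, Fin.prod_univ_two]
  rw [hpibar, ← pow_le_pow_iff_left₀ (by positivity) (Real.rpow_nonneg (norm_nonneg x) _)
    two_ne_zero, mul_pow, hsq _ (abs_nonneg _), hsq _ (abs_nonneg _), hsq _ (norm_nonneg x),
    show -γ * 2 = -(2 * γ) by ring]
  norm_num

lemma abs_sub_le_two_mul_norm : |x 0 - x 1| ≤ 2 * ‖x‖ := by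
  rw [norm_fin_two_eq_max]
  linarith [abs_sub (x 0) (x 1), le_max_left |x 0| |x 1|, le_max_right |x 0| |x 1|]

lemma norm_le_min_add_abs_sub : ‖x‖ ≤ min |x 0| |x 1| + |x 0 - x 1| := by
  rw [norm_fin_two_eq_max]
  linarith [max_sub_min_eq_abs' |x 0| |x 1|, abs_abs_sub_abs_le_abs_sub (x 0) (x 1)]

lemma min_abs_le_one_of_pibar_le {γ : ℝ} (hγ : -(1 / 2) < γ) (h : Pibar 2 x ≤ ‖x‖ ^ (-γ)) :
    min |x 0| |x 1| ≤ 1 := by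
  rw [pibar_two_le_rpow_iff, abs_mul_abs_eq_min_mul_norm] at h
  rcases le_or_gt ‖x‖ 1 with hx | hx
  · exact min_le_max.trans (norm_fin_two_eq_max x ▸ hx)
  · have hlt : ‖x‖ ^ (-(2 * γ)) < ‖x‖ ^ (1 : ℝ) :=
      Real.rpow_lt_rpow_of_exponent_lt hx (by linarith)
    rw [Real.rpow_one] at hlt
    exact le_of_mul_le_mul_right (by linarith) (by linarith : (0 : ℝ) < ‖x‖)

end FinTwo

lemma min_rpow_mul_rpow_le_rpow {A B t M : ℝ} (s : ℝ) (hA : 0 < A) (ht : 0 < t)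
    (hAM : A * t ≤ M) (hMB : M ≤ B * t) : min (A ^ s) (B ^ s) * t ^ s ≤ M ^ s := by
  rcases le_total 0 s with hs | hs
  · calc min (A ^ s) (B ^ s) * t ^ s ≤ A ^ s * t ^ s := by gcongr; exact min_le_left _ _
      _ = (A * t) ^ s := (Real.mul_rpow hA.le ht.le).symm
      _ ≤ M ^ s := Real.rpow_le_rpow (by positivity) hAM hs
  · have hB : 0 < B := pos_of_mul_pos_left ((mul_pos hA ht).trans_le (hAM.trans hMB)) ht.le
    calc min (A ^ s) (B ^ s) * t ^ s ≤ B ^ s * t ^ s := by gcongr; exact min_le_right _ _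
      _ = (B * t) ^ s := (Real.mul_rpow hB.le ht.le).symm
      _ ≤ M ^ s := Real.rpow_le_rpow_of_nonpos ((mul_pos hA ht).trans_le hAM) hMB hs

lemma eventually_pibar_le_of_min_abs_le {c γ δ : ℝ} (hc : 0 < c) (hγ : 1 ≤ γ) (hδ : 0 < δ) :
    ∀ᶠ t in atTop, ∀ x : Fin 2 → ℝ, |x 0 - x 1| = c * t → min |x 0| |x 1| ≤ t ^ (1 - γ) →
      Pibar 2 x ≤ ‖x‖ ^ (-(γ / 2 - 1 - δ)) := by
  set s := 1 + 2 * δ - γ with hs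
  set K := min ((c / 2) ^ s) ((c + 1) ^ s)
  have hK : 0 < K := lt_min (by positivity) (by positivity)
  filter_upwards [eventually_ge_atTop 1,
    ((tendsto_rpow_atTop (by positivity : 0 < 2 * δ)).const_mul_atTop hK).eventually_ge_atTop 1]
    with t ht htK x hdiff hmin
  have ht0 : 0 < t := by linarith
  have hmin1 : min |x 0| |x 1| ≤ 1 :=
    hmin.trans (Real.rpow_le_one_of_one_le_of_nonpos ht (by linarith))
  have hlow : c / 2 * t ≤ ‖x‖ := by linarith [abs_sub_le_two_mul_norm x]
  have hup : ‖x‖ ≤ (c + 1) * t := by linarith [norm_le_min_add_abs_sub x]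
  have hx : 0 < ‖x‖ := (by positivity : 0 < c / 2 * t).trans_le hlow
  have hkey : t ^ (1 - γ) ≤ ‖x‖ ^ s := calc
    t ^ (1 - γ) ≤ K * t ^ (2 * δ) * t ^ (1 - γ) := le_mul_of_one_le_left (by positivity) htK
    _ = K * t ^ s := by rw [mul_assoc, ← Real.rpow_add ht0, hs]; ring_nf
    _ ≤ ‖x‖ ^ s := min_rpow_mul_rpow_le_rpow s (by positivity) ht0 hlow hup
  rw [pibar_two_le_rpow_iff, abs_mul_abs_eq_min_mul_norm,
    show -(2 * (γ / 2 - 1 - δ)) = s + 1 by ring, Real.rpow_add_one hx.ne']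
  exact mul_le_mul_of_nonneg_right (hmin.trans hkey) (norm_nonneg x)

lemma eventually_min_abs_le_of_pibar_le {c γ δ : ℝ} (hc : 0 < c) (hγ : -(1 / 2) < γ)
    (hδ : 0 < δ) :
    ∀ᶠ t in atTop, ∀ x : Fin 2 → ℝ, |x 0 - x 1| = c * t → Pibar 2 x ≤ ‖x‖ ^ (-γ) →
      min |x 0| |x 1| ≤ t ^ (1 - (2 * γ + 2 - δ)) := by
  filter_upwards [eventually_gt_atTop 0,
    (tendsto_rpow_atTop hδ).eventually_ge_atTop ((c / 2) ^ (-(2 * γ + 1)))] with t ht htK x hdiff hx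
  have hlow : c / 2 * t ≤ ‖x‖ := by linarith [abs_sub_le_two_mul_norm x]
  have hxpos : 0 < ‖x‖ := (by positivity : 0 < c / 2 * t).trans_le hlow
  rw [pibar_two_le_rpow_iff, abs_mul_abs_eq_min_mul_norm,
    show -(2 * γ) = -(2 * γ + 1) + 1 by ring, Real.rpow_add_one hxpos.ne'] at hx
  calc min |x 0| |x 1| ≤ ‖x‖ ^ (-(2 * γ + 1)) := le_of_mul_le_mul_right hx hxpos
    _ ≤ (c / 2 * t) ^ (-(2 * γ + 1)) :=
      Real.rpow_le_rpow_of_nonpos (by positivity) hlow (by linarith)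
    _ = (c / 2) ^ (-(2 * γ + 1)) * t ^ (-(2 * γ + 1)) := Real.mul_rpow (by positivity) ht.le
    _ ≤ t ^ δ * t ^ (-(2 * γ + 1)) := by gcongr
    _ = t ^ (1 - (2 * γ + 2 - δ)) := by rw [← Real.rpow_add ht]; ring_nf

def thetaVec (θ₁ θ₂ : ℝ) (z : ℤ × ℤ) : Fin 2 → ℝ :=
  ![(z.1 : ℝ) * θ₁ - (z.2 : ℝ), (z.1 : ℝ) * θ₂ - (z.2 : ℝ)]

lemma thetaVec_injective {θ₁ θ₂ : ℝ} (h : θ₁ ≠ θ₂) : Function.Injective (thetaVec θ₁ θ₂) := by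
  rintro ⟨q, p⟩ ⟨q', p'⟩ hz
  have h0 : (q : ℝ) * θ₁ - p = q' * θ₁ - p' := congrFun hz 0
  have h1 : (q : ℝ) * θ₂ - p = q' * θ₂ - p' := congrFun hz 1
  have hq : (q : ℝ) = q' := by
    have : ((q : ℝ) - q') * (θ₁ - θ₂) = 0 := by linarith
    linarith [(mul_eq_zero.1 this).resolve_right (sub_ne_zero.2 h)]
  have hp : (p : ℝ) = p' := by rw [hq] at h0; linarith
  rw [Int.cast_inj.1 hq, Int.cast_inj.1 hp]

lemma abs_thetaVec_zero_sub_one (θ₁ θ₂ : ℝ) (z : ℤ × ℤ) :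
    |thetaVec θ₁ θ₂ z 0 - thetaVec θ₁ θ₂ z 1| = |θ₁ - θ₂| * |(z.1 : ℝ)| := by
  simp only [thetaVec, Matrix.cons_val_zero, Matrix.cons_val_one]
  rw [← abs_mul, mul_comm]
  ring_nf

def approxSet (θ γ : ℝ) : Set (ℤ × ℤ) :=
  {zp : ℤ × ℤ | zp.1 ≠ 0 ∧ |θ - (zp.2 : ℝ) / (zp.1 : ℝ)| ≤ |(zp.1 : ℝ)| ^ (-γ)}

lemma mem_approxSet_iff {θ γ : ℝ} {z : ℤ × ℤ} (hz : z.1 ≠ 0) :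
    z ∈ approxSet θ γ ↔ |(z.1 : ℝ) * θ - z.2| ≤ |(z.1 : ℝ)| ^ (1 - γ) := by
  have hq : (z.1 : ℝ) ≠ 0 := Int.cast_ne_zero.2 hz
  have hdiv : θ - (z.2 : ℝ) / z.1 = (z.1 * θ - z.2) / z.1 := by field_simp
  simp only [approxSet, Set.mem_ofPred_eq, hz, ne_eq, not_false_eq_true, true_and]
  rw [hdiv, abs_div, div_le_iff₀ (abs_pos.2 hq), show 1 - γ = -γ + 1 by ring,
    Real.rpow_add_one (abs_ne_zero.2 hq)]

lemma mem_approxSet_union_iff {θ₁ θ₂ γ : ℝ} {z : ℤ × ℤ} (hz : z.1 ≠ 0) :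
    z ∈ approxSet θ₁ γ ∪ approxSet θ₂ γ ↔
      min |thetaVec θ₁ θ₂ z 0| |thetaVec θ₁ θ₂ z 1| ≤ |(z.1 : ℝ)| ^ (1 - γ) := by
  rw [Set.mem_union, mem_approxSet_iff hz, mem_approxSet_iff hz, min_le_iff]
  rfl

lemma approxSet_one_infinite (θ : ℝ) : (approxSet θ 1).Infinite := by
  refine Set.infinite_of_injective_forall_mem
    (f := fun n : ℕ => ((n + 1 : ℤ), round (((n + 1 : ℤ) : ℝ) * θ)))
    (fun a b hab => by simpa using congrArg Prod.fst hab) fun n => ?_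
  rw [mem_approxSet_iff (by positivity), sub_self, Real.rpow_zero]
  exact (abs_sub_round _).trans (by norm_num)

lemma abs_snd_le_of_mem_approxSet {θ γ : ℝ} (hγ : 0 ≤ γ) {z : ℤ × ℤ} (hz : z ∈ approxSet θ γ) :
    |(z.2 : ℝ)| ≤ (|θ| + 1) * |(z.1 : ℝ)| := by
  have hq : 1 ≤ |(z.1 : ℝ)| := by
    rw [← Int.cast_abs]
    exact_mod_cast Int.one_le_abs hz.1
  have happrox := (mem_approxSet_iff hz.1).1 hz
  have hpow : |(z.1 : ℝ)| ^ (1 - γ) ≤ |(z.1 : ℝ)| := by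
    simpa using Real.rpow_le_rpow_of_exponent_le hq (by linarith : 1 - γ ≤ 1)
  have htri := abs_sub ((z.1 : ℝ) * θ) (z.1 * θ - z.2)
  rw [sub_sub_cancel, abs_mul] at htri
  linarith

def latticeApprox (θ₁ θ₂ γ : ℝ) : Set (ℤ × ℤ) :=
  {z | Pibar 2 (thetaVec θ₁ θ₂ z) ≤ ‖thetaVec θ₁ θ₂ z‖ ^ (-γ)}

lemma abs_snd_le_of_mem_latticeApprox {θ₁ θ₂ γ : ℝ} (hγ : -(1 / 2) < γ) {z : ℤ × ℤ}
    (hz : z ∈ latticeApprox θ₁ θ₂ γ) : |(z.2 : ℝ)| ≤ max |θ₁| |θ₂| * |(z.1 : ℝ)| + 1 := by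
  have hbound : ∀ θ, |θ| ≤ max |θ₁| |θ₂| → |(z.1 : ℝ) * θ - z.2| ≤ 1 →
      |(z.2 : ℝ)| ≤ max |θ₁| |θ₂| * |(z.1 : ℝ)| + 1 := fun θ hθ h1 => by
    have htri := abs_sub ((z.1 : ℝ) * θ) (z.1 * θ - z.2)
    rw [sub_sub_cancel, abs_mul] at htri
    nlinarith [abs_nonneg (z.1 : ℝ)]
  rcases min_le_iff.1 (min_abs_le_one_of_pibar_le _ hγ hz) with h | h
  · exact hbound θ₁ (le_max_left _ _) h
  · exact hbound θ₂ (le_max_right _ _) h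

lemma finite_setOf_abs_intCast_le (A : ℝ) : {n : ℤ | |(n : ℝ)| ≤ A}.Finite :=
  (Set.finite_Icc (-⌈A⌉) ⌈A⌉).subset fun n hn =>
    have hn : |(n : ℝ)| ≤ A := hn
    abs_le.1 (by rw [← Int.cast_abs] at hn; exact_mod_cast hn.trans (Int.le_ceil A))

lemma Set.Infinite.sep_eventually_abs_fst {S : Set (ℤ × ℤ)} (hS : S.Infinite) {a b : ℝ}
    (ha : 0 ≤ a) (hab : ∀ z ∈ S, |(z.2 : ℝ)| ≤ a * |(z.1 : ℝ)| + b) {P : ℝ → Prop}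
    (hP : ∀ᶠ t in atTop, P t) : {z ∈ S | P |(z.1 : ℝ)|}.Infinite := by
  obtain ⟨Q, hQ⟩ := eventually_atTop.1 hP
  refine (hS.sdiff ((finite_setOf_abs_intCast_le Q).prod
    (finite_setOf_abs_intCast_le (a * Q + b)))).mono ?_
  rintro z ⟨hzS, hz⟩
  refine ⟨hzS, hQ _ ?_⟩
  by_contra! hlt
  exact hz ⟨hlt.le, (hab z hzS).trans (by gcongr)⟩

lemma latticeApprox_infinite_of_approxSet {θ₁ θ₂ γ δ : ℝ} (hθ : θ₁ ≠ θ₂) (hγ : 1 ≤ γ)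
    (hδ : 0 < δ) (h : (approxSet θ₁ γ ∪ approxSet θ₂ γ).Infinite) :
    (latticeApprox θ₁ θ₂ (γ / 2 - 1 - δ)).Infinite := by
  have hab : ∀ z ∈ approxSet θ₁ γ ∪ approxSet θ₂ γ,
      |(z.2 : ℝ)| ≤ (max |θ₁| |θ₂| + 1) * |(z.1 : ℝ)| + 0 := by
    rintro z (hz | hz) <;> refine (abs_snd_le_of_mem_approxSet (by linarith) hz).trans ?_ <;>
      simp only [add_zero] <;> gcongr
    exacts [le_max_left _ _, le_max_right _ _]
  refine (h.sep_eventually_abs_fst (by positivity) hab (eventually_pibar_le_of_min_abs_le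
    (abs_pos.2 (sub_ne_zero.2 hθ)) hγ hδ)).mono ?_
  rintro z ⟨hz, hP⟩
  have hq : z.1 ≠ 0 := by rcases hz with hz | hz <;> exact hz.1
  exact hP _ (abs_thetaVec_zero_sub_one θ₁ θ₂ z) ((mem_approxSet_union_iff hq).1 hz)

lemma approxSet_infinite_of_latticeApprox {θ₁ θ₂ γ δ : ℝ} (hθ : θ₁ ≠ θ₂) (hγ : -(1 / 2) < γ)
    (hδ : 0 < δ) (h : (latticeApprox θ₁ θ₂ γ).Infinite) :
    (approxSet θ₁ (2 * γ + 2 - δ) ∪ approxSet θ₂ (2 * γ + 2 - δ)).Infinite := by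
  refine (h.sep_eventually_abs_fst (by positivity)
    (fun z hz => abs_snd_le_of_mem_latticeApprox hγ hz)
    ((eventually_min_abs_le_of_pibar_le (abs_pos.2 (sub_ne_zero.2 hθ)) hγ hδ).and
      (eventually_gt_atTop 0))).mono ?_
  rintro z ⟨hz, hP, hpos⟩
  have hq : z.1 ≠ 0 := by rintro h0; simp [h0] at hpos
  exact (mem_approxSet_union_iff hq).2 (hP _ (abs_thetaVec_zero_sub_one θ₁ θ₂ z) hz)

lemma exists_latticeApprox_infinite_iff {θ₁ θ₂ : ℝ} (hθ : θ₁ ≠ θ₂) (r : ℝ) :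
    (∃ γ, r < γ ∧ (latticeApprox θ₁ θ₂ γ).Infinite) ↔
      ∃ γ, 2 * r + 2 < γ ∧ (approxSet θ₁ γ ∪ approxSet θ₂ γ).Infinite := by
  have hone : (approxSet θ₁ 1 ∪ approxSet θ₂ 1).Infinite :=
    Set.infinite_union.2 (Or.inl (approxSet_one_infinite θ₁))
  constructor
  · rintro ⟨γ, hrγ, hγ⟩
    rcases lt_or_ge r (-(1 / 2)) with hr | hr
    · exact ⟨1, by linarith, hone⟩
    · exact ⟨2 * γ + 2 - (γ - r), by linarith,
        approxSet_infinite_of_latticeApprox hθ (by linarith) (by linarith) hγ⟩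
  · rintro ⟨γ, hrγ, hγ⟩
    obtain ⟨γ', hrγ', hγ'1, hγ'⟩ : ∃ γ', 2 * r + 2 < γ' ∧ 1 ≤ γ' ∧
        (approxSet θ₁ γ' ∪ approxSet θ₂ γ').Infinite := by
      rcases le_total 1 γ with h1 | h1
      · exact ⟨γ, hrγ, h1, hγ⟩
      · exact ⟨1, by linarith, le_rfl, hone⟩
    exact ⟨_, by linarith,
      latticeApprox_infinite_of_approxSet (δ := (γ' / 2 - 1 - r) / 2) hθ hγ'1 (by linarith) hγ'⟩

lemma coe_lt_sSup_setOf_coe_iff (P : ℝ → Prop) (r : ℝ) :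
    (r : EReal) < sSup {g : EReal | ∃ γ : ℝ, g = γ ∧ P γ} ↔ ∃ γ, r < γ ∧ P γ := by
  rw [lt_sSup_iff]
  constructor
  · rintro ⟨_, ⟨γ, rfl, hγ⟩, hr⟩
    exact ⟨γ, EReal.coe_lt_coe_iff.1 hr, hγ⟩
  · rintro ⟨γ, hr, hγ⟩
    exact ⟨γ, ⟨γ, rfl, hγ⟩, EReal.coe_lt_coe_iff.2 hr⟩

lemma coe_lt_dioExp_latticeTheta_iff {θ₁ θ₂ : ℝ} (hθ : θ₁ ≠ θ₂) (r : ℝ) :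
    (r : EReal) < dioExp 2 (latticeTheta θ₁ θ₂) ↔
      ∃ γ, r < γ ∧ (latticeApprox θ₁ θ₂ γ).Infinite := by
  have hset : ∀ γ : ℝ, {x | x ∈ latticeTheta θ₁ θ₂ ∧ Pibar 2 x ≤ ‖x‖ ^ (-γ)} =
      thetaVec θ₁ θ₂ '' latticeApprox θ₁ θ₂ γ := fun γ => by
    ext x
    constructor
    · rintro ⟨⟨z, rfl⟩, hx⟩
      exact ⟨z, hx, rfl⟩
    · rintro ⟨z, hz, rfl⟩
      exact ⟨⟨z, rfl⟩, hz⟩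
  simp only [dioExp, hset, Set.infinite_image_iff (thetaVec_injective hθ).injOn]
  exact coe_lt_sSup_setOf_coe_iff _ r

lemma coe_lt_max_irrMeasure_iff (θ₁ θ₂ r : ℝ) :
    (r : EReal) < max (irrMeasure θ₁) (irrMeasure θ₂) ↔
      ∃ γ, r < γ ∧ (approxSet θ₁ γ ∪ approxSet θ₂ γ).Infinite := by
  have hμ : ∀ θ, irrMeasure θ = sSup {g : EReal | ∃ γ : ℝ, g = γ ∧ (approxSet θ γ).Infinite} :=
    fun _ => rfl
  simp only [lt_max_iff, hμ, coe_lt_sSup_setOf_coe_iff, Set.infinite_union, and_or_left, exists_or]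

lemma EReal.coe_lt_half_mul_sub_one_iff (r : ℝ) (M : EReal) :
    (r : EReal) < ((1 / 2 : ℝ) : EReal) * M - 1 ↔ ((2 * r + 2 : ℝ) : EReal) < M := by
  induction M using EReal.rec with
  | bot => simp [EReal.coe_mul_bot_of_pos]
  | coe m =>
    rw [← EReal.coe_mul, ← EReal.coe_one, ← EReal.coe_sub, EReal.coe_lt_coe_iff,
      EReal.coe_lt_coe_iff]
    constructor <;> intro <;> linarith
  | top =>
    rw [EReal.coe_mul_top_of_pos (by norm_num), ← EReal.coe_one, EReal.top_sub_coe]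
    exact iff_of_true (EReal.coe_lt_top r) (EReal.coe_lt_top _)

lemma EReal.eq_of_forall_coe_lt_iff {a b : EReal} (h : ∀ r : ℝ, (r : EReal) < a ↔ (r : EReal) < b) :
    a = b := by
  refine le_antisymm (not_lt.1 fun hba => ?_) (not_lt.1 fun hab => ?_)
  · obtain ⟨r, hbr, hra⟩ := EReal.exists_between_coe_real hba
    exact (hbr.trans ((h r).1 hra)).false
  · obtain ⟨r, har, hrb⟩ := EReal.exists_between_coe_real hab
    exact (har.trans ((h r).2 hrb)).false

/-- For distinct reals `θ₁, θ₂`: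
`ω(Λ_{θ₁,θ₂}) = (1/2)·max(μ(θ₁), μ(θ₂)) − 1` (in the extended reals). -/
theorem stmt_6 (θ₁ θ₂ : ℝ) (h : θ₁ ≠ θ₂) :
    dioExp 2 (latticeTheta θ₁ θ₂) =
      ((1 / 2 : ℝ) : EReal) * max (irrMeasure θ₁) (irrMeasure θ₂) - 1 :=
  EReal.eq_of_forall_coe_lt_iff fun r => by
    rw [coe_lt_dioExp_latticeTheta_iff h, EReal.coe_lt_half_mul_sub_one_iff,
      coe_lt_max_irrMeasure_iff]
    exact exists_latticeApprox_infinite_iff h r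

end
end

section
/- Let θ_1 and θ_2 be distinct real numbers. Then N(Λ_{θ1,θ2}) > 0 if and only if both θ_1 and θ_2 are badly approximable. -/
open scoped BigOperators

noncomputable section

/-- The norm minimum `N(Λ) = inf {Π(x)^d : x ∈ Λ, x ≠ 0}`. -/
def normMin (d : ℕ) (Λ : Set (Fin d → ℝ)) : ℝ :=
  sInf {r : ℝ | ∃ x ∈ Λ, x ≠ 0 ∧ r = Pibar d x ^ d}

/-- `θ` is badly approximable: `inf {q·|qθ − p| : (q,p) ∈ ℤ², q ≥ 1} > 0`. -/
def BadlyApproximable (θ : ℝ) : Prop :=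
  0 < sInf {r : ℝ | ∃ q p : ℤ, 1 ≤ q ∧ r = (q : ℝ) * |(q : ℝ) * θ - (p : ℝ)|}

lemma pibar_two_sq (x : Fin 2 → ℝ) : Pibar 2 x ^ 2 = |x 0| * |x 1| := by
  have h0 : (0:ℝ) ≤ |x 0| := abs_nonneg _
  have h1 : (0:ℝ) ≤ |x 1| := abs_nonneg _
  simp only [Pibar, Fin.prod_univ_two]
  rw [mul_pow, ← Real.rpow_natCast (|x 0| ^ _) 2, ← Real.rpow_natCast (|x 1| ^ _) 2,
      ← Real.rpow_mul h0, ← Real.rpow_mul h1]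
  norm_num

lemma mem_normSet {θ₁ θ₂ : ℝ} (h : θ₁ ≠ θ₂) (r : ℝ) :
    r ∈ {r : ℝ | ∃ x ∈ latticeTheta θ₁ θ₂, x ≠ 0 ∧ r = Pibar 2 x ^ 2} ↔
    ∃ q p : ℤ, ¬(q = 0 ∧ p = 0) ∧
      r = |(q : ℝ) * θ₁ - p| * |(q : ℝ) * θ₂ - p| := by
  constructor
  · rintro ⟨x, ⟨⟨q, p⟩, rfl⟩, hx0, rfl⟩
    refine ⟨q, p, ?_, ?_⟩
    · rintro ⟨rfl, rfl⟩
      apply hx0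
      funext i
      fin_cases i <;> simp
    · rw [pibar_two_sq]
      simp
  · rintro ⟨q, p, hz, rfl⟩
    refine ⟨![(q : ℝ) * θ₁ - p, (q : ℝ) * θ₂ - p], ⟨(q, p), rfl⟩, ?_, ?_⟩
    · intro hx0
      have e1 : (q : ℝ) * θ₁ - p = 0 := by
        have := congrFun hx0 0; simpa using this
      have e2 : (q : ℝ) * θ₂ - p = 0 := by
        have := congrFun hx0 1; simpa using this
      rcases eq_or_ne q 0 with hq | hq
      · subst hq
        simp at e1
        exact hz ⟨rfl, by exact_mod_cast e1⟩
      · have hqR : (q : ℝ) ≠ 0 := Int.cast_ne_zero.mpr hq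
        apply h
        have : (q : ℝ) * θ₁ = (q : ℝ) * θ₂ := by linarith
        exact mul_left_cancel₀ hqR this
    · rw [pibar_two_sq]; simp

/-- If products are uniformly bounded below, then `α` is badly approximable. -/
lemma bad_of_bound {α β : ℝ} (c : ℝ) (hc : 0 < c)
    (H : ∀ q p : ℤ, ¬(q = 0 ∧ p = 0) →
      c ≤ |(q : ℝ) * α - p| * |(q : ℝ) * β - p|) :
    BadlyApproximable α := by
  unfold BadlyApproximable
  have hne : ({r : ℝ | ∃ q p : ℤ, 1 ≤ q ∧ r = (q : ℝ) * |(q : ℝ) * α - (p : ℝ)|}).Nonempty :=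
    ⟨(1 : ℝ) * |(1 : ℝ) * α - (0 : ℝ)|, 1, 0, le_refl 1, by push_cast; ring⟩
  have hd : (0:ℝ) < 1 + |β - α| := by positivity
  have hcpos : 0 < min 1 (c / (1 + |β - α|)) := by positivity
  refine lt_of_lt_of_le hcpos (le_csInf hne ?_)
  rintro r ⟨q, p, hq, rfl⟩
  have hqR : (1 : ℝ) ≤ (q : ℝ) := by exact_mod_cast hq
  have hq0 : (0 : ℝ) < (q : ℝ) := by linarith
  rcases le_or_gt 1 |(q : ℝ) * α - p| with hA | hA
  · calc min 1 (c / (1 + |β - α|)) ≤ 1 := min_le_left _ _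
      _ ≤ (q : ℝ) * |(q : ℝ) * α - p| := by nlinarith
  · have hz : ¬(q = 0 ∧ p = 0) := by rintro ⟨rfl, -⟩; norm_num at hq
    have hP := H q p hz
    have hB : |(q : ℝ) * β - p| ≤ (q : ℝ) * (1 + |β - α|) := by
      have : (q : ℝ) * β - p = ((q : ℝ) * α - p) + (q : ℝ) * (β - α) := by ring
      rw [this]
      calc |((q : ℝ) * α - p) + (q : ℝ) * (β - α)|
          ≤ |(q : ℝ) * α - p| + |(q : ℝ) * (β - α)| := abs_add_le _ _
        _ ≤ 1 + (q : ℝ) * |β - α| := by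
            rw [abs_mul, abs_of_pos hq0]; linarith
        _ ≤ (q : ℝ) * (1 + |β - α|) := by nlinarith [abs_nonneg (β - α)]
    have hAnn : (0:ℝ) ≤ |(q : ℝ) * α - p| := abs_nonneg _
    have key : c ≤ ((q : ℝ) * |(q : ℝ) * α - p|) * (1 + |β - α|) := by
      calc c ≤ |(q : ℝ) * α - p| * |(q : ℝ) * β - p| := hP
        _ ≤ |(q : ℝ) * α - p| * ((q : ℝ) * (1 + |β - α|)) :=
            mul_le_mul_of_nonneg_left hB hAnn
        _ = ((q : ℝ) * |(q : ℝ) * α - p|) * (1 + |β - α|) := by ring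
    calc min 1 (c / (1 + |β - α|)) ≤ c / (1 + |β - α|) := min_le_right _ _
      _ ≤ (q : ℝ) * |(q : ℝ) * α - p| := by
          rw [div_le_iff₀ hd]; exact key

/-- Core positive-`q` bound in the reverse direction. -/
lemma prod_bound_pos {θ₁ θ₂ : ℝ} {c₁ c₂ : ℝ} (hc₁ : 0 < c₁) (hc₂ : 0 < c₂)
    (H1 : ∀ q p : ℤ, 1 ≤ q → c₁ ≤ (q : ℝ) * |(q : ℝ) * θ₁ - p|)
    (H2 : ∀ q p : ℤ, 1 ≤ q → c₂ ≤ (q : ℝ) * |(q : ℝ) * θ₂ - p|)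
    (q p : ℤ) (hq : 1 ≤ q) :
    min c₁ c₂ * |θ₁ - θ₂| / 2 ≤ |(q : ℝ) * θ₁ - p| * |(q : ℝ) * θ₂ - p| := by
  have hqR : (1 : ℝ) ≤ (q : ℝ) := by exact_mod_cast hq
  have hq0 : (0 : ℝ) < (q : ℝ) := by linarith
  set A := |(q : ℝ) * θ₁ - p| with hAdef
  set B := |(q : ℝ) * θ₂ - p| with hBdef
  have hAnn : 0 ≤ A := abs_nonneg _
  have hBnn : 0 ≤ B := abs_nonneg _
  have hT : (q : ℝ) * |θ₁ - θ₂| ≤ A + B := by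
    have : (q : ℝ) * (θ₁ - θ₂) = ((q : ℝ) * θ₁ - p) - ((q : ℝ) * θ₂ - p) := by ring
    calc (q : ℝ) * |θ₁ - θ₂| = |(q : ℝ) * (θ₁ - θ₂)| := by
          rw [abs_mul, abs_of_pos hq0]
      _ = |((q : ℝ) * θ₁ - p) - ((q : ℝ) * θ₂ - p)| := by rw [this]
      _ ≤ A + B := abs_sub _ _
  have hTnn : 0 ≤ |θ₁ - θ₂| := abs_nonneg _
  have hmnn : 0 ≤ min c₁ c₂ := le_min hc₁.le hc₂.le
  rcases le_total A B with hAB | hAB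
  · -- B is big: B ≥ q|θ₁-θ₂|/2, and q*A ≥ c₁
    have hBbig : (q : ℝ) * |θ₁ - θ₂| / 2 ≤ B := by linarith
    have h1 := H1 q p hq
    have hm : min c₁ c₂ ≤ (q : ℝ) * A := le_trans (min_le_left _ _) h1
    nlinarith [mul_le_mul_of_nonneg_left hBbig hAnn,
      mul_le_mul_of_nonneg_right hm hTnn]
  · have hAbig : (q : ℝ) * |θ₁ - θ₂| / 2 ≤ A := by linarith
    have h2 := H2 q p hq
    have hm : min c₁ c₂ ≤ (q : ℝ) * B := le_trans (min_le_right _ _) h2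
    nlinarith [mul_le_mul_of_nonneg_left hAbig hBnn,
      mul_le_mul_of_nonneg_right hm hTnn]

/-- For distinct reals `θ₁, θ₂`: `N(Λ_{θ₁,θ₂}) > 0` iff both `θ₁` and `θ₂`
are badly approximable. -/
theorem stmt_7 (θ₁ θ₂ : ℝ) (h : θ₁ ≠ θ₂) :
    0 < normMin 2 (latticeTheta θ₁ θ₂) ↔
      BadlyApproximable θ₁ ∧ BadlyApproximable θ₂ := by
  set S := {r : ℝ | ∃ x ∈ latticeTheta θ₁ θ₂, x ≠ 0 ∧ r = Pibar 2 x ^ 2} with hSdef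
  have hSeq : normMin 2 (latticeTheta θ₁ θ₂) = sInf S := rfl
  have hSbdd : BddBelow S := by
    refine ⟨0, ?_⟩
    rintro r ⟨x, -, -, rfl⟩
    rw [pibar_two_sq]
    positivity
  have hSne : S.Nonempty := by
    refine ⟨1, (mem_normSet h 1).2 ⟨0, 1, by simp, by norm_num⟩⟩
  constructor
  · intro hpos
    rw [hSeq] at hpos
    have key : ∀ q p : ℤ, ¬(q = 0 ∧ p = 0) →
        sInf S ≤ |(q : ℝ) * θ₁ - p| * |(q : ℝ) * θ₂ - p| := by
      intro q p hz
      exact csInf_le hSbdd ((mem_normSet h _).2 ⟨q, p, hz, rfl⟩)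
    constructor
    · exact bad_of_bound (sInf S) hpos key
    · exact bad_of_bound (sInf S) hpos
        (fun q p hz => (key q p hz).trans_eq (mul_comm _ _))
  · rintro ⟨h1, h2⟩
    have T1bdd : BddBelow {r : ℝ | ∃ q p : ℤ, 1 ≤ q ∧ r = (q : ℝ) * |(q : ℝ) * θ₁ - (p : ℝ)|} := by
      refine ⟨0, ?_⟩
      rintro r ⟨q, p, hq, rfl⟩
      have : (0:ℝ) ≤ (q : ℝ) := by exact_mod_cast (show (0:ℤ) ≤ q by omega)
      positivity
    have T2bdd : BddBelow {r : ℝ | ∃ q p : ℤ, 1 ≤ q ∧ r = (q : ℝ) * |(q : ℝ) * θ₂ - (p : ℝ)|} := by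
      refine ⟨0, ?_⟩
      rintro r ⟨q, p, hq, rfl⟩
      have : (0:ℝ) ≤ (q : ℝ) := by exact_mod_cast (show (0:ℤ) ≤ q by omega)
      positivity
    set c₁ := sInf {r : ℝ | ∃ q p : ℤ, 1 ≤ q ∧ r = (q : ℝ) * |(q : ℝ) * θ₁ - (p : ℝ)|} with hc₁def
    set c₂ := sInf {r : ℝ | ∃ q p : ℤ, 1 ≤ q ∧ r = (q : ℝ) * |(q : ℝ) * θ₂ - (p : ℝ)|} with hc₂def
    have hc₁ : 0 < c₁ := h1
    have hc₂ : 0 < c₂ := h2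
    have H1 : ∀ q p : ℤ, 1 ≤ q → c₁ ≤ (q : ℝ) * |(q : ℝ) * θ₁ - p| :=
      fun q p hq => csInf_le T1bdd ⟨q, p, hq, rfl⟩
    have H2 : ∀ q p : ℤ, 1 ≤ q → c₂ ≤ (q : ℝ) * |(q : ℝ) * θ₂ - p| :=
      fun q p hq => csInf_le T2bdd ⟨q, p, hq, rfl⟩
    have hTpos : 0 < |θ₁ - θ₂| := abs_pos.mpr (sub_ne_zero.mpr h)
    have hcpos : 0 < min 1 (min c₁ c₂ * |θ₁ - θ₂| / 2) := by positivity
    rw [hSeq]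
    refine lt_of_lt_of_le hcpos (le_csInf hSne ?_)
    intro r hr
    obtain ⟨q, p, hz, rfl⟩ := (mem_normSet h r).1 hr
    rcases lt_trichotomy q 0 with hq | hq | hq
    · -- q ≤ -1 : replace by (-q, -p)
      have hq' : 1 ≤ -q := by omega
      have := prod_bound_pos hc₁ hc₂ H1 H2 (-q) (-p) hq'
      have e1 : |((-q : ℤ) : ℝ) * θ₁ - ((-p : ℤ) : ℝ)| = |(q : ℝ) * θ₁ - p| := by
        push_cast; rw [← abs_neg]; ring_nf
      have e2 : |((-q : ℤ) : ℝ) * θ₂ - ((-p : ℤ) : ℝ)| = |(q : ℝ) * θ₂ - p| := by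
        push_cast; rw [← abs_neg]; ring_nf
      rw [e1, e2] at this
      exact le_trans (min_le_right _ _) this
    · subst hq
      have hp : p ≠ 0 := by tauto
      have hp1 : (1:ℝ) ≤ |(p : ℝ)| := by
        rw [← Int.cast_abs]
        exact_mod_cast Int.one_le_abs hp
      simp only [Int.cast_zero, zero_mul, zero_sub, abs_neg]
      calc min 1 (min c₁ c₂ * |θ₁ - θ₂| / 2) ≤ 1 := min_le_left _ _
        _ ≤ |(p : ℝ)| * |(p : ℝ)| := by nlinarith
    · have hq' : 1 ≤ q := hq
      exact le_trans (min_le_right _ _) (prod_bound_pos hc₁ hc₂ H1 H2 q p hq')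

end
end

section
/- Let θ be an irrational real number with regular continued fraction expansion θ = [a_0; a_1, a_2, ...] and convergents p_n/q_n. Then μ(θ) = 2 + limsup_{n→∞} (log a_{n+1})/(log q_n). -/
/-!
The convergents satisfy `1 / (2 q_n q_{n+1}) < |θ - p_n / q_n| < 1 / (q_n q_{n+1})`, and
`a_{n+1} q_n ≤ q_{n+1} ≤ 2 a_{n+1} q_n`. Hence `p_n / q_n` is an approximation of order `r`
as soon as `q_n ^ (r - 2) ≤ a_{n+1}`, which happens infinitely often when `r < 2 + limsup`.
Conversely, by the best approximation property of convergents, a fraction `P / z` with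
`q_n ≤ z < q_{n+1}` satisfies `|θ - P / z| ≥ 1 / (2 z q_{n+1})`; so infinitely many approximations
of order `γ > 2` force `q_n ^ (γ - 2) ≤ 4 a_{n+1}` infinitely often, i.e. `γ ≤ 2 + limsup`.
-/

noncomputable section

open Filter Topology Real

theorem EReal.two_add_coe_sub_two (x : ℝ) : 2 + ((x - 2 : ℝ) : EReal) = x := by
  rw [show (2 : EReal) = ((2 : ℝ) : EReal) from rfl, ← EReal.coe_add, add_sub_cancel]

theorem frequently_rpow_lt_of_lt_limsup {x y : ℕ → ℝ} (hx : Tendsto x atTop atTop)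
    (hy : ∀ n, 0 < y n) {t : ℝ}
    (ht : (t : EReal) < limsup (fun n => ((log (y n) / log (x n) : ℝ) : EReal)) atTop) :
    ∃ᶠ n in atTop, x n ^ t < y n := by
  refine ((frequently_lt_of_lt_limsup (by isBoundedDefault) ht).and_eventually
    (hx.eventually_gt_atTop 1)).mono ?_
  rintro n ⟨hn, hx1⟩
  rw [EReal.coe_lt_coe_iff, lt_div_iff₀ (log_pos hx1)] at hn
  exact (rpow_lt_iff_lt_log (by linarith) (hy n)).2 hn

theorem le_limsup_of_frequently_rpow_le {x y : ℕ → ℝ} (hx : Tendsto x atTop atTop)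
    (hy : ∀ n, 0 < y n) {t C : ℝ} (hC : 0 < C) (h : ∃ᶠ n in atTop, x n ^ t ≤ C * y n) :
    (t : EReal) ≤ limsup (fun n => ((log (y n) / log (x n) : ℝ) : EReal)) atTop := by
  refine EReal.ge_of_forall_gt_iff_ge.1 fun s hs =>
    le_limsup_of_frequently_le ?_ (by isBoundedDefault)
  have hst : 0 < t - s := sub_pos.2 (EReal.coe_lt_coe_iff.1 hs)
  have hlarge : ∀ᶠ n in atTop, 1 < x n ∧ log C ≤ (t - s) * log (x n) :=
    (hx.eventually_gt_atTop 1).and <|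
      ((tendsto_log_atTop.comp hx).eventually_ge_atTop (log C / (t - s))).mono fun n hn => by
        rwa [Function.comp_apply, div_le_iff₀' hst] at hn
  refine (h.and_eventually hlarge).mono ?_
  rintro n ⟨hn, hx1, hlog⟩
  rw [rpow_le_iff_le_log (by linarith) (mul_pos hC (hy n)), log_mul hC.ne' (hy n).ne'] at hn
  rw [EReal.coe_le_coe_iff, le_div_iff₀ (log_pos hx1)]
  linarith

theorem exists_mul_add_mul_eq_of_det {p₀ p₁ q₀ q₁ ε : ℤ} (h : p₁ * q₀ - p₀ * q₁ = ε)
    (hε : ε ^ 2 = 1) (Q P : ℤ) : ∃ x y : ℤ, x * q₀ + y * q₁ = Q ∧ x * p₀ + y * p₁ = P :=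
  ⟨ε * (Q * p₁ - P * q₁), ε * (P * q₀ - Q * p₀),
    by linear_combination (ε * Q) * h + Q * hε, by linear_combination (ε * P) * h + P * hε⟩

theorem ne_zero_and_mul_nonpos_of_mul_add_mul_eq {x y q₀ q₁ Q : ℤ} (hq₀ : 1 ≤ q₀)
    (h : x * q₀ + y * q₁ = Q) (hQ : 1 ≤ Q) (hQq₁ : Q < q₁) : x ≠ 0 ∧ x * y ≤ 0 := by
  refine ⟨?_, ?_⟩
  · rintro rfl
    rcases le_or_gt y 0 with hy | hy <;> nlinarith
  · rcases le_or_gt x 0 with hx | hx <;> rcases le_or_gt y 0 with hy | hy <;> nlinarith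

theorem abs_le_abs_add_of_mul_nonneg {u v : ℝ} (h : 0 ≤ u * v) : |u| ≤ |u + v| :=
  sq_le_sq.1 (by nlinarith [sq_nonneg v])

def approxPairs (θ γ : ℝ) : Set (ℤ × ℤ) :=
  {zp | zp.1 ≠ 0 ∧ |θ - (zp.2 : ℝ) / (zp.1 : ℝ)| ≤ |(zp.1 : ℝ)| ^ (-γ)}

theorem infinite_of_forall_exists_lt_abs_fst {s : Set (ℤ × ℤ)}
    (h : ∀ B : ℤ, ∃ zp ∈ s, B < |zp.1|) : s.Infinite := by
  refine Set.Infinite.of_image (fun zp => |zp.1|) (Set.infinite_of_not_bddAbove ?_)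
  rintro ⟨B, hB⟩
  obtain ⟨zp, hzp, hlt⟩ := h B
  exact (hB ⟨zp, hzp, rfl⟩).not_gt hlt

theorem exists_lt_abs_fst_of_infinite {θ γ : ℝ} (hγ : 0 ≤ γ) (h : (approxPairs θ γ).Infinite)
    (B : ℤ) : ∃ zp ∈ approxPairs θ γ, B < |zp.1| := by
  by_contra! hB
  set C := ⌈B * (|θ| + 1)⌉
  refine h (((Set.finite_Icc (-B) B).prod (Set.finite_Icc (-C) C)).subset ?_)
  rintro ⟨z, P⟩ hzP
  have hzB := hB _ hzP
  obtain ⟨hz0, hle⟩ := hzP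
  have hz1 : (1 : ℝ) ≤ |(z : ℝ)| := by exact_mod_cast Int.one_le_abs hz0
  have hzB' : |(z : ℝ)| ≤ B := by exact_mod_cast hzB
  have hclose : |θ - P / z| ≤ 1 := hle.trans (rpow_le_one_of_one_le_of_nonpos hz1 (by linarith))
  have hPz : |(P / z : ℝ)| ≤ |θ| + 1 := by
    linarith [abs_sub_abs_le_abs_sub (P / z : ℝ) θ, abs_sub_comm (P / z : ℝ) θ]
  have hP : |(P : ℝ)| ≤ B * (|θ| + 1) := by
    rw [← div_mul_cancel₀ (P : ℝ) (by exact_mod_cast hz0 : (z : ℝ) ≠ 0), abs_mul, mul_comm]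
    exact mul_le_mul hzB' hPz (abs_nonneg _) (by linarith)
  refine ⟨abs_le.1 hzB, abs_le.1 ?_⟩
  exact_mod_cast hP.trans (Int.le_ceil _)

theorem exists_approx_of_infinite {θ γ : ℝ} (hγ : 0 ≤ γ) (h : (approxPairs θ γ).Infinite)
    (B : ℤ) : ∃ z P : ℤ, B < z ∧ |θ - P / z| ≤ (z : ℝ) ^ (-γ) := by
  obtain ⟨⟨z, P⟩, ⟨-, hle⟩, hB⟩ := exists_lt_abs_fst_of_infinite hγ h B
  rw [← Int.cast_abs] at hle
  rcases abs_cases z with ⟨hz, -⟩ | ⟨hz, -⟩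
  · exact ⟨z, P, hz ▸ hB, by rwa [hz] at hle⟩
  · refine ⟨-z, -P, hz ▸ hB, ?_⟩
    rw [hz] at hle
    simpa only [Int.cast_neg, neg_div_neg_eq] using hle

structure IsCFDenominators (a q : ℕ → ℤ) : Prop where
  one_le_a : ∀ n, 1 ≤ n → 1 ≤ a n
  zero : q 0 = 1
  one : q 1 = a 1
  add_two : ∀ n, q (n + 2) = a (n + 2) * q (n + 1) + q n

structure IsCFConvergents (a p q : ℕ → ℤ) : Prop extends IsCFDenominators a q where
  num_zero : p 0 = a 0
  num_one : p 1 = a 1 * a 0 + 1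
  num_add_two : ∀ n, p (n + 2) = a (n + 2) * p (n + 1) + p n

namespace IsCFDenominators

variable {a q : ℕ → ℤ} (hq : IsCFDenominators a q)
include hq

theorem one_le (n : ℕ) : 1 ≤ q n := by
  suffices ∀ n, 1 ≤ q n ∧ 1 ≤ q (n + 1) from (this n).1
  intro n
  induction n with
  | zero => exact ⟨hq.zero.ge, hq.one ▸ hq.one_le_a 1 le_rfl⟩
  | succ n ih =>
    refine ⟨ih.2, ?_⟩
    have := hq.one_le_a (n + 2) (by omega)
    nlinarith [hq.add_two n]

theorem pos (n : ℕ) : (0 : ℝ) < q n := by exact_mod_cast hq.one_le n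

theorem mul_le_succ (n : ℕ) : a (n + 1) * q n ≤ q (n + 1) := by
  rcases n with _ | n
  · simp [hq.zero, hq.one]
  · nlinarith [hq.add_two n, hq.one_le n]

theorem monotone : Monotone q := by
  refine monotone_nat_of_le_succ fun n => ?_
  nlinarith [hq.mul_le_succ n, hq.one_le_a (n + 1) (by omega), hq.one_le n]

theorem lt_succ {n : ℕ} (hn : 1 ≤ n) : q n < q (n + 1) := by
  obtain ⟨n, rfl⟩ := Nat.exists_eq_add_of_le' hn
  nlinarith [hq.add_two n, hq.one_le_a (n + 2) (by omega), hq.one_le n, hq.one_le (n + 1)]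

theorem succ_le_two_mul (n : ℕ) : q (n + 1) ≤ 2 * a (n + 1) * q n := by
  rcases n with _ | n
  · simp only [hq.zero, hq.one]
    linarith [hq.one_le_a 1 le_rfl]
  · nlinarith [hq.add_two n, hq.one_le_a (n + 2) (by omega), hq.one_le n,
      hq.monotone (Nat.le_succ n)]

theorem natCast_le (n : ℕ) : (n : ℤ) ≤ q n := by
  induction n with
  | zero => simpa using (zero_lt_one.trans_le (hq.one_le 0)).le
  | succ n ih =>
    rcases n with _ | n
    · simpa using hq.one_le 1
    · push_cast at ih ⊢
      linarith [hq.lt_succ (n := n + 1) (by omega)]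

theorem tendsto_atTop : Tendsto (fun n => (q n : ℝ)) atTop atTop :=
  tendsto_atTop_mono (fun n => by exact_mod_cast hq.natCast_le n) tendsto_natCast_atTop_atTop

theorem exists_le_lt {z : ℤ} (hz : 1 ≤ z) : ∃ n, q n ≤ z ∧ z < q (n + 1) := by
  classical
  have hex : ∃ n, z < q (n + 1) := by
    refine ⟨z.toNat, ?_⟩
    have := hq.natCast_le (z.toNat + 1)
    push_cast at this
    linarith [Int.self_le_toNat z]
  refine ⟨Nat.find hex, ?_, Nat.find_spec hex⟩
  rcases h : Nat.find hex with _ | n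
  · simpa [hq.zero] using hz
  · exact not_lt.1 (Nat.find_min hex (h ▸ Nat.lt_succ_self n))

end IsCFDenominators

namespace IsCFConvergents

variable {a p q : ℕ → ℤ} (hc : IsCFConvergents a p q)
include hc

theorem det (n : ℕ) : p (n + 1) * q n - p n * q (n + 1) = (-1) ^ n := by
  induction n with
  | zero =>
    simp only [hc.zero, hc.one, hc.num_zero, hc.num_one]
    ring
  | succ n ih =>
    rw [hc.add_two, hc.num_add_two, pow_succ]
    linear_combination -ih

theorem neg_one_pow_mul_convergent_add_two_sub_pos (n : ℕ) :
    0 < (-1) ^ n * ((p (n + 2) : ℝ) / q (n + 2) - p n / q n) := by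
  have hdet : ((p (n + 2) : ℝ) * q n - p n * q (n + 2)) = (-1) ^ n * a (n + 2) := by
    have : p (n + 2) * q n - p n * q (n + 2) = (-1) ^ n * a (n + 2) := by
      rw [hc.add_two, hc.num_add_two]
      linear_combination a (n + 2) * hc.det n
    exact_mod_cast this
  have hq₀ := hc.pos n
  have hq₂ := hc.pos (n + 2)
  have ha : (0 : ℝ) < a (n + 2) := by exact_mod_cast hc.one_le_a (n + 2) (by omega)
  have hsq : ((-1 : ℝ) ^ n) ^ 2 = 1 := by simp [← pow_mul]
  rw [div_sub_div _ _ hq₂.ne' hq₀.ne', mul_comm (q (n + 2) : ℝ), hdet, ← mul_div_assoc,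
    ← mul_assoc, ← sq, hsq, one_mul]
  positivity

theorem succ_mul_error_eq (θ : ℝ) (n : ℕ) :
    (q (n + 1) : ℝ) * ((-1) ^ n * ((q n : ℝ) * θ - p n)) =
      1 - q n * ((-1) ^ (n + 1) * ((q (n + 1) : ℝ) * θ - p (n + 1))) := by
  have hdet : (p (n + 1) : ℝ) * q n - p n * q (n + 1) = (-1) ^ n := by exact_mod_cast hc.det n
  have hsq : ((-1 : ℝ) ^ n) ^ 2 = 1 := by simp [← pow_mul]
  linear_combination (-1 : ℝ) ^ n * hdet + hsq

variable {θ : ℝ} (hθ : Tendsto (fun n => (p n : ℝ) / (q n : ℝ)) atTop (𝓝 θ))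
include hθ

theorem neg_one_pow_mul_sub_convergent_pos (n : ℕ) : 0 < (-1) ^ n * (θ - p n / q n) := by
  set u : ℕ → ℝ := fun k => (-1) ^ n * ((p (n + 2 * k) : ℝ) / q (n + 2 * k))
  have hu : StrictMono u := strictMono_nat_of_lt_succ fun k => by
    have := hc.neg_one_pow_mul_convergent_add_two_sub_pos (n + 2 * k)
    rw [pow_add, pow_mul, neg_one_sq, one_pow, mul_one] at this
    simp only [u, show n + 2 * (k + 1) = n + 2 * k + 2 by ring]
    linarith
  have hlim : Tendsto u atTop (𝓝 ((-1) ^ n * θ)) :=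
    (hθ.comp (tendsto_atTop_mono (fun k => show k ≤ n + 2 * k by omega) tendsto_id)).const_mul _
  have := (hu zero_lt_one).trans_le (hu.monotone.ge_of_tendsto hlim 1)
  simp only [u, mul_zero, add_zero] at this
  linarith

theorem neg_one_pow_mul_error_pos (n : ℕ) : 0 < (-1) ^ n * ((q n : ℝ) * θ - p n) := by
  have h := mul_pos (hc.pos n) (hc.neg_one_pow_mul_sub_convergent_pos hθ n)
  rwa [mul_left_comm, mul_sub, mul_div_cancel₀ _ (hc.pos n).ne'] at h

theorem error_mul_error_succ_neg (n : ℕ) :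
    ((q n : ℝ) * θ - p n) * ((q (n + 1) : ℝ) * θ - p (n + 1)) < 0 := by
  have h := mul_pos (hc.neg_one_pow_mul_error_pos hθ n) (hc.neg_one_pow_mul_error_pos hθ (n + 1))
  have hsq : ((-1 : ℝ) ^ n) ^ 2 = 1 := by simp [← pow_mul]
  rw [pow_succ] at h
  nlinarith

theorem neg_one_pow_mul_error_lt (n : ℕ) :
    (-1) ^ n * ((q n : ℝ) * θ - p n) < 1 / q (n + 1) := by
  rw [lt_div_iff₀ (hc.pos (n + 1)), mul_comm, hc.succ_mul_error_eq]
  linarith [mul_pos (hc.pos n) (hc.neg_one_pow_mul_error_pos hθ (n + 1))]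

theorem one_div_two_mul_lt_neg_one_pow_mul_error (n : ℕ) :
    1 / (2 * q (n + 1)) < (-1) ^ n * ((q n : ℝ) * θ - p n) := by
  have hq₂ : (2 * q n : ℝ) ≤ q (n + 2) := by
    have : 2 * q n ≤ q (n + 2) := by
      nlinarith [hc.add_two n, hc.one_le_a (n + 2) (by omega), hc.monotone (Nat.le_succ n),
        hc.one_le n]
    exact_mod_cast this
  have hsmall : (q n : ℝ) * ((-1) ^ (n + 1) * ((q (n + 1) : ℝ) * θ - p (n + 1))) < 1 / 2 :=
    calc _ < (q n : ℝ) * (1 / q (n + 2)) :=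
          mul_lt_mul_of_pos_left (hc.neg_one_pow_mul_error_lt hθ (n + 1)) (hc.pos n)
      _ ≤ 1 / 2 := by
          rw [mul_one_div, div_le_iff₀ (hc.pos _)]
          linarith
  rw [div_lt_iff₀ (by linarith [hc.pos (n + 1)])]
  linarith [hc.succ_mul_error_eq θ n]

theorem abs_sub_convergent_lt (n : ℕ) : |θ - p n / q n| < 1 / (q n * q (n + 1)) := by
  have hpos := hc.neg_one_pow_mul_sub_convergent_pos hθ n
  have habs : |θ - p n / q n| = (-1) ^ n * (θ - p n / q n) := by
    rw [← abs_of_pos hpos, abs_mul, abs_pow, abs_neg, abs_one, one_pow, one_mul]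
  have h := hc.neg_one_pow_mul_error_lt hθ n
  have hdiv : (-1) ^ n * (θ - p n / q n) = (-1) ^ n * ((q n : ℝ) * θ - p n) / q n := by
    field_simp [(hc.pos n).ne']
  have hcancel : 1 / ((q n : ℝ) * q (n + 1)) * q n = 1 / q (n + 1) := by
    field_simp [(hc.pos n).ne']
  rwa [habs, hdiv, div_lt_iff₀ (hc.pos n), hcancel]

/-- Best approximation: write `(Q, P) = x (q_n, p_n) + y (q_{n+1}, p_{n+1})`; then `x ≠ 0`, `x` and
`y` have opposite signs while the errors `q_n θ - p_n` alternate in sign, so no cancellation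
occurs. -/
theorem abs_error_le {n : ℕ} {Q P : ℤ} (hQ : 1 ≤ Q) (hQn : Q < q (n + 1)) :
    |(q n : ℝ) * θ - p n| ≤ |(Q : ℝ) * θ - P| := by
  obtain ⟨x, y, hxQ, hxP⟩ := exists_mul_add_mul_eq_of_det (hc.det n) (by simp [← pow_mul]) Q P
  obtain ⟨hx0, hxy⟩ := ne_zero_and_mul_nonpos_of_mul_add_mul_eq (hc.one_le n) hxQ hQ hQn
  set e₀ := (q n : ℝ) * θ - p n
  set e₁ := (q (n + 1) : ℝ) * θ - p (n + 1)
  have hsplit : (Q : ℝ) * θ - P = x * e₀ + y * e₁ := by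
    rw [← hxQ, ← hxP]
    push_cast
    ring
  have hx : (1 : ℝ) ≤ |(x : ℝ)| := by exact_mod_cast Int.one_le_abs hx0
  have hprod : 0 ≤ (x * e₀) * (y * e₁) := by
    have hxy' : (x * y : ℝ) ≤ 0 := by exact_mod_cast hxy
    nlinarith [hc.error_mul_error_succ_neg hθ n]
  calc |e₀| ≤ |(x : ℝ)| * |e₀| := le_mul_of_one_le_left (abs_nonneg _) hx
    _ = |x * e₀| := (abs_mul _ _).symm
    _ ≤ |x * e₀ + y * e₁| := abs_le_abs_add_of_mul_nonneg hprod
    _ = |(Q : ℝ) * θ - P| := by rw [hsplit]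

theorem one_div_le_abs_sub {n : ℕ} {z P : ℤ} (hz : 1 ≤ z) (hzn : z < q (n + 1)) :
    1 / (2 * (z * q (n + 1))) ≤ |θ - P / z| := by
  have hz' : (0 : ℝ) < z := by exact_mod_cast hz
  have hdiv : |θ - P / z| = |(z : ℝ) * θ - P| / z := by
    rw [← abs_of_pos hz', ← abs_div, abs_of_pos hz']
    congr 1
    field_simp
  rw [hdiv, le_div_iff₀ hz']
  calc (1 : ℝ) / (2 * (z * q (n + 1))) * z = 1 / (2 * q (n + 1)) := by field_simp
    _ ≤ (-1) ^ n * ((q n : ℝ) * θ - p n) := (hc.one_div_two_mul_lt_neg_one_pow_mul_error hθ n).le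
    _ ≤ |(q n : ℝ) * θ - p n| := by
        simpa [abs_mul] using le_abs_self ((-1) ^ n * ((q n : ℝ) * θ - p n))
    _ ≤ |(z : ℝ) * θ - P| := hc.abs_error_le hθ hz hzn

theorem infinite_approxPairs {r : ℝ} (h : ∃ᶠ n in atTop, (q n : ℝ) ^ (r - 2) ≤ a (n + 1)) :
    (approxPairs θ r).Infinite := by
  refine infinite_of_forall_exists_lt_abs_fst fun B => ?_
  obtain ⟨n, hBn, hqa⟩ := frequently_atTop.1 h (B.toNat + 1)
  have hqpos := hc.pos n
  have hBq : B < |q n| := by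
    have := hc.natCast_le n
    rw [abs_of_pos (by linarith [hc.one_le n])]
    omega
  have hq0 : q n ≠ 0 := by linarith [hc.one_le n]
  refine ⟨(q n, p n), ⟨hq0, ?_⟩, hBq⟩
  have hkey : (q n : ℝ) ^ r ≤ q n * q (n + 1) := by
    rw [rpow_sub hqpos, rpow_two, div_le_iff₀ (by positivity)] at hqa
    have : (a (n + 1) * q n : ℝ) ≤ q (n + 1) := by exact_mod_cast hc.mul_le_succ n
    nlinarith
  calc |θ - p n / q n| ≤ 1 / (q n * q (n + 1)) := (hc.abs_sub_convergent_lt hθ n).le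
    _ ≤ 1 / (q n : ℝ) ^ r := one_div_le_one_div_of_le (rpow_pos_of_pos hqpos r) hkey
    _ = |(q n : ℝ)| ^ (-r) := by rw [abs_of_pos hqpos, rpow_neg hqpos.le, one_div]

theorem frequently_rpow_le_of_infinite {γ : ℝ} (hγ : 2 < γ) (h : (approxPairs θ γ).Infinite) :
    ∃ᶠ n in atTop, (q n : ℝ) ^ (γ - 2) ≤ 4 * a (n + 1) := by
  refine frequently_atTop.2 fun N => ?_
  obtain ⟨z, P, hNz, hzP⟩ := exists_approx_of_infinite (by linarith) h (q N)
  have hz1 : 1 ≤ z := (hc.one_le N).trans hNz.le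
  have hzpos : (0 : ℝ) < z := by exact_mod_cast hz1
  obtain ⟨n, hnz, hzn⟩ := hc.exists_le_lt hz1
  have hNn : N ≤ n := by
    by_contra! hlt
    linarith [hc.monotone (Nat.succ_le_of_lt hlt)]
  refine ⟨n, hNn, ?_⟩
  have hzγ : (z : ℝ) ^ γ ≤ 2 * (z * q (n + 1)) := by
    have := (hc.one_div_le_abs_sub hθ (P := P) hz1 hzn).trans hzP
    rw [rpow_neg hzpos.le, ← one_div] at this
    exact (one_div_le_one_div (mul_pos two_pos (mul_pos hzpos (hc.pos _)))
      (rpow_pos_of_pos hzpos γ)).1 this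
  have hz : (z : ℝ) ^ (γ - 1) ≤ 2 * q (n + 1) := by
    rw [rpow_sub_one hzpos.ne', div_le_iff₀ hzpos]
    linarith
  have hq : (q n : ℝ) ^ (γ - 1) ≤ 2 * q (n + 1) :=
    (rpow_le_rpow (hc.pos n).le (by exact_mod_cast hnz) (by linarith)).trans hz
  have hsucc : (q (n + 1) : ℝ) ≤ 2 * a (n + 1) * q n := by exact_mod_cast hc.succ_le_two_mul n
  rw [show γ - 2 = γ - 1 - 1 by ring, rpow_sub_one (hc.pos n).ne', div_le_iff₀ (hc.pos n)]
  linarith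

end IsCFConvergents

theorem stmt_8_general (θ : ℝ)
    (a : ℕ → ℤ) (ha : ∀ n, 1 ≤ n → 1 ≤ a n)
    (p q : ℕ → ℤ)
    (hq0 : q 0 = 1) (hq1 : q 1 = a 1)
    (hqrec : ∀ n, q (n + 2) = a (n + 2) * q (n + 1) + q n)
    (hp0 : p 0 = a 0) (hp1 : p 1 = a 1 * a 0 + 1)
    (hprec : ∀ n, p (n + 2) = a (n + 2) * p (n + 1) + p n)
    (hconv : Filter.Tendsto (fun n => (p n : ℝ) / (q n : ℝ)) Filter.atTop (nhds θ)) :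
    irrMeasure θ =
      2 + Filter.limsup
        (fun n => ((Real.log (a (n + 1)) / Real.log (q n) : ℝ) : EReal))
        Filter.atTop := by
  have hc : IsCFConvergents a p q := ⟨⟨ha, hq0, hq1, hqrec⟩, hp0, hp1, hprec⟩
  have ha' : ∀ n, (1 : ℝ) ≤ a (n + 1) := fun n => by exact_mod_cast ha (n + 1) n.succ_pos
  have hy : ∀ n, (0 : ℝ) < a (n + 1) := fun n => zero_lt_one.trans_le (ha' n)
  set L := Filter.limsup (fun n => ((Real.log (a (n + 1)) / Real.log (q n) : ℝ) : EReal)) atTop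
  apply le_antisymm
  · refine sSup_le ?_
    rintro _ ⟨γ, rfl, hγ⟩
    rcases le_or_gt γ 2 with h2 | h2
    · have hL : ((0 : ℝ) : EReal) ≤ L := le_limsup_of_frequently_rpow_le hc.tendsto_atTop hy
        one_pos (Frequently.of_forall fun n => by simpa using ha' n)
      calc (γ : EReal) ≤ 2 := EReal.coe_le_coe_iff.2 h2
        _ ≤ 2 + L := le_add_of_nonneg_right (by exact_mod_cast hL)
    · have hL := le_limsup_of_frequently_rpow_le hc.tendsto_atTop hy four_pos
        (hc.frequently_rpow_le_of_infinite hconv h2 hγ)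
      calc (γ : EReal) = 2 + ((γ - 2 : ℝ) : EReal) := (EReal.two_add_coe_sub_two γ).symm
        _ ≤ 2 + L := by gcongr
  · refine EReal.ge_of_forall_gt_iff_ge.1 fun r hr =>
      le_sSup ⟨r, rfl, hc.infinite_approxPairs hconv ?_⟩
    have hrL : ((r - 2 : ℝ) : EReal) < L := by
      by_contra! hLr
      refine hr.not_ge ?_
      calc 2 + L ≤ 2 + ((r - 2 : ℝ) : EReal) := by gcongr
        _ = r := EReal.two_add_coe_sub_two r
    exact (frequently_rpow_lt_of_lt_limsup hc.tendsto_atTop hy hrL).mono fun _ => le_of_lt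

/-- If `θ` is irrational with regular continued fraction expansion
`θ = [a₀; a₁, a₂, …]` and convergents `pₙ/qₙ` (given by the standard recurrences
and converging to `θ`), then `μ(θ) = 2 + limsup_n (log a_{n+1})/(log qₙ)`. -/
theorem stmt_8 (θ : ℝ) (hθ : Irrational θ)
    (a : ℕ → ℤ) (ha : ∀ n, 1 ≤ n → 1 ≤ a n)
    (p q : ℕ → ℤ)
    (hq0 : q 0 = 1) (hq1 : q 1 = a 1)
    (hqrec : ∀ n, q (n + 2) = a (n + 2) * q (n + 1) + q n)
    (hp0 : p 0 = a 0) (hp1 : p 1 = a 1 * a 0 + 1)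
    (hprec : ∀ n, p (n + 2) = a (n + 2) * p (n + 1) + p n)
    (hconv : Filter.Tendsto (fun n => (p n : ℝ) / (q n : ℝ)) Filter.atTop (nhds θ)) :
    irrMeasure θ =
      2 + Filter.limsup
        (fun n => ((Real.log (a (n + 1)) / Real.log (q n) : ℝ) : EReal))
        Filter.atTop :=
  stmt_8_general θ a ha p q hq0 hq1 hqrec hp0 hp1 hprec hconv

end
end

section
/- Let d ≥ 2 and let Λ be a lattice of full rank in ℝ^d with dual lattice Λ*. Then N(Λ) > 0 if and only if N(Λ*) > 0. -/
open scoped BigOperators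

noncomputable section

/-- `Λ` is a lattice of full rank in `ℝ^d`. -/
def IsFullLattice (d : ℕ) (Λ : Set (Fin d → ℝ)) : Prop :=
  ∃ A : Matrix (Fin d) (Fin d) ℝ, A.det ≠ 0 ∧
    Λ = {x | ∃ z : Fin d → ℤ, x = A.mulVec fun i => (z i : ℝ)}

/-- The dual lattice `Λ* = {y : ⟨y,x⟩ ∈ ℤ for all x ∈ Λ}`. -/
def dualLattice (d : ℕ) (Λ : Set (Fin d → ℝ)) : Set (Fin d → ℝ) :=
  {y | ∀ x ∈ Λ, ∃ n : ℤ, ∑ i, y i * x i = (n : ℝ)}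

/-!
If `N(Λ*) = 0`, take `y ∈ Λ*`, `y ≠ 0`, with `∏ |y_i|` tiny and a coordinate `j` with `y_j ≠ 0`;
after enlarging the zero coordinates of `y` slightly, all `|y_i|` are positive. Minkowski's linear
forms theorem, applied to the forms `x_i` (`i ≠ j`) with bounds `t_i = s / |y_i|` and to `⟨y, x⟩`
with bound `1`, yields a nonzero `x ∈ Λ` with `|x_i| < t_i` for `i ≠ j` and `⟨y, x⟩ = 0`, the latter
being an integer of absolute value `< 1`. Solving `⟨y, x⟩ = 0` for `x_j` gives
`∏ |x_i| ≤ 2 (d - 1) |det Λ| s`, where `s ^ (d - 1) = 2 |det Λ| ∏ |y_i|` tends to `0` with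
`∏ |y_i|` because `d ≥ 2`. Hence `N(Λ) = 0`, and the converse follows from `Λ** = Λ`.
-/

open MeasureTheory Filter Topology
open scoped Matrix

variable {d : ℕ}

def colLattice (A : Matrix (Fin d) (Fin d) ℝ) : Set (Fin d → ℝ) :=
  {x | ∃ z : Fin d → ℤ, x = A *ᵥ fun i => (z i : ℝ)}

lemma pibar_pow_eq_prod_abs (hd : d ≠ 0) (x : Fin d → ℝ) : Pibar d x ^ d = ∏ i, |x i| := by
  rw [Pibar, ← Finset.prod_pow]
  refine Finset.prod_congr rfl fun i _ => ?_
  rw [← Real.rpow_natCast, ← Real.rpow_mul (abs_nonneg _), one_div,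
    inv_mul_cancel₀ (by exact_mod_cast hd), Real.rpow_one]

lemma normMin_eq_sInf (hd : d ≠ 0) (Λ : Set (Fin d → ℝ)) :
    normMin d Λ = sInf ((fun x => ∏ i, |x i|) '' {x ∈ Λ | x ≠ 0}) := by
  simp only [normMin, pibar_pow_eq_prod_abs hd]
  congr 1
  ext r
  simp [eq_comm, and_assoc]

lemma normMin_nonneg (Λ : Set (Fin d → ℝ)) : 0 ≤ normMin d Λ :=
  Real.sInf_nonneg <| by
    rintro _ ⟨x, -, -, rfl⟩
    exact pow_nonneg (Finset.prod_nonneg fun i _ => Real.rpow_nonneg (abs_nonneg _) _) d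

lemma normMin_le_prod_abs (hd : d ≠ 0) {Λ : Set (Fin d → ℝ)} {x : Fin d → ℝ} (hx : x ∈ Λ)
    (hx0 : x ≠ 0) : normMin d Λ ≤ ∏ i, |x i| := by
  rw [normMin_eq_sInf hd]
  exact csInf_le ⟨0, by rintro _ ⟨x, -, rfl⟩; positivity⟩ ⟨x, ⟨hx, hx0⟩, rfl⟩

lemma exists_prod_abs_lt_of_normMin_eq_zero (hd : d ≠ 0) {Λ : Set (Fin d → ℝ)}
    (hΛ : ∃ x ∈ Λ, x ≠ 0) (h0 : normMin d Λ = 0) {c : ℝ} (hc : 0 < c) :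
    ∃ x ∈ Λ, x ≠ 0 ∧ ∏ i, |x i| < c := by
  rw [normMin_eq_sInf hd] at h0
  obtain ⟨x, hx, hx0⟩ := hΛ
  have hbdd : BddBelow ((fun x => ∏ i, |x i|) '' {x ∈ Λ | x ≠ 0}) :=
    ⟨0, by rintro _ ⟨x, -, rfl⟩; positivity⟩
  obtain ⟨_, ⟨y, hy, rfl⟩, hyc⟩ :=
    (csInf_lt_iff hbdd ⟨_, x, ⟨hx, hx0⟩, rfl⟩).1 (h0 ▸ hc)
  exact ⟨y, hy.1, hy.2, hyc⟩

section ProdAbs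

variable {ι : Type*} [Fintype ι]

lemma exists_prod_lt_of_prod_abs_lt {y : ι → ℝ} {j : ι} (hyj : y j ≠ 0) {c : ℝ}
    (hc : ∏ i, |y i| < c) :
    ∃ b : ι → ℝ, (∀ i, 0 < b i) ∧ (∀ i, |y i| ≤ b i) ∧ b j = |y j| ∧ ∏ i, b i < c := by
  have hcont : Tendsto (fun η => ∏ i, max |y i| η) (𝓝[>] 0) (𝓝 (∏ i, |y i|)) := by
    have : Continuous fun η => ∏ i, max |y i| η := by fun_prop
    simpa using (this.tendsto 0).mono_left nhdsWithin_le_nhds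
  obtain ⟨η, hηc, hη, hηy⟩ := (Eventually.and (hcont.eventually (gt_mem_nhds hc))
    (Ioo_mem_nhdsGT (abs_pos.2 hyj))).exists
  exact ⟨fun i => max |y i| η, fun i => lt_max_of_lt_right hη, fun i => le_max_left _ _,
    max_eq_left hηy.le, hηc⟩

variable [DecidableEq ι]

lemma prod_abs_le_of_dotProduct_eq_zero {x y t : ι → ℝ} {j : ι} (hyj : y j ≠ 0)
    (hx : ∀ i ≠ j, |x i| ≤ t i) (hxy : y ⬝ᵥ x = 0) :
    ∏ i, |x i| ≤ (∏ i ∈ Finset.univ.erase j, t i) *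
      ((∑ i ∈ Finset.univ.erase j, |y i| * t i) / |y j|) := by
  have hxj : |x j| ≤ (∑ i ∈ Finset.univ.erase j, |y i| * t i) / |y j| := by
    rw [le_div_iff₀ (abs_pos.2 hyj), mul_comm, ← abs_mul]
    have hyx : y j * x j = -∑ i ∈ Finset.univ.erase j, y i * x i := by
      rw [eq_neg_iff_add_eq_zero, Finset.add_sum_erase _ (fun i => y i * x i) (Finset.mem_univ j)]
      exact hxy
    rw [hyx, abs_neg]
    refine (Finset.abs_sum_le_sum_abs _ _).trans (Finset.sum_le_sum fun i hi => ?_)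
    rw [abs_mul]
    exact mul_le_mul_of_nonneg_left (hx i (Finset.ne_of_mem_erase hi)) (abs_nonneg _)
  rw [← Finset.mul_prod_erase _ _ (Finset.mem_univ j), mul_comm]
  exact mul_le_mul
    (Finset.prod_le_prod (fun i _ => abs_nonneg _) fun i hi => hx i (Finset.ne_of_mem_erase hi))
    hxj (abs_nonneg _) (Finset.prod_nonneg fun i hi =>
      (abs_nonneg _).trans (hx i (Finset.ne_of_mem_erase hi)))

end ProdAbs

section ColLattice

variable {A : Matrix (Fin d) (Fin d) ℝ}

def colBasis (hA : A.det ≠ 0) : Module.Basis (Fin d) ℝ (Fin d → ℝ) :=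
  (Pi.basisFun ℝ (Fin d)).map (A.toLinearEquiv' (A.invertibleOfIsUnitDet hA.isUnit))

lemma colBasis_apply (hA : A.det ≠ 0) (i : Fin d) : colBasis hA i = fun k => A k i := by
  ext k
  simp [colBasis, Matrix.toLinearEquiv', Matrix.mulVec_single]

lemma coe_span_colBasis (hA : A.det ≠ 0) :
    (Submodule.span ℤ (Set.range (colBasis hA)) : Set (Fin d → ℝ)) = colLattice A := by
  ext x
  rw [SetLike.mem_coe, Submodule.mem_span_range_iff_exists_fun]
  have hsum : ∀ z : Fin d → ℤ, ∑ i, z i • colBasis hA i = A *ᵥ fun i => (z i : ℝ) := by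
    intro z
    ext k
    simp [colBasis_apply, Matrix.mulVec, dotProduct, mul_comm]
  simp only [hsum, colLattice, Set.mem_ofPred_eq, eq_comm]

lemma exists_ne_zero_mem_colLattice_of_volume_lt (hA : A.det ≠ 0) {S : Set (Fin d → ℝ)}
    (hsymm : ∀ x ∈ S, -x ∈ S) (hconv : Convex ℝ S)
    (hvol : ENNReal.ofReal (2 ^ d * |A.det|) < volume S) :
    ∃ x ∈ colLattice A, x ≠ 0 ∧ x ∈ S := by
  let L := (Submodule.span ℤ (Set.range (colBasis hA))).toAddSubgroup
  have : Countable L := by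
    refine Set.Countable.to_subtype (s := (L : Set (Fin d → ℝ))) ?_
    change (Submodule.span ℤ (Set.range (colBasis hA)) : Set (Fin d → ℝ)).Countable
    rw [coe_span_colBasis]
    exact (Set.countable_range fun z : Fin d → ℤ => A *ᵥ fun i => (z i : ℝ)).mono
      (by rintro _ ⟨z, rfl⟩; exact ⟨z, rfl⟩)
  have hcovol : volume (ZSpan.fundamentalDomain (colBasis hA)) = ENNReal.ofReal |A.det| := by
    rw [ZSpan.volume_fundamentalDomain, ← Matrix.det_transpose]
    congr 3
    ext i k
    simp [colBasis_apply]
  obtain ⟨x, hx0, hxS⟩ := exists_ne_zero_mem_lattice_of_measure_mul_two_pow_lt_measure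
    (ZSpan.isAddFundamentalDomain' (colBasis hA) volume) hsymm hconv (by
      rwa [Module.finrank_fin_fun, hcovol, mul_comm, ← ENNReal.ofReal_ofNat 2,
        ← ENNReal.ofReal_pow zero_le_two, ← ENNReal.ofReal_mul (by positivity)])
  refine ⟨x, ?_, by simpa using hx0, hxS⟩
  rw [← coe_span_colBasis hA]
  exact x.2

lemma exists_ne_zero_mem_colLattice_abs_mulVec_lt (hA : A.det ≠ 0)
    {M : Matrix (Fin d) (Fin d) ℝ} (hM : M.det ≠ 0) {u : Fin d → ℝ} (hu : ∀ i, 0 < u i)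
    (h : |A.det| * |M.det| < ∏ i, u i) :
    ∃ x ∈ colLattice A, x ≠ 0 ∧ ∀ i, |(M *ᵥ x) i| < u i := by
  let box : Set (Fin d → ℝ) := Set.univ.pi fun i => Set.Ioo (-u i) (u i)
  have hdet : LinearMap.det (Matrix.toLin' M) ≠ 0 := by rwa [LinearMap.det_toLin']
  have hvol : volume (Matrix.toLin' M ⁻¹' box) =
      ENNReal.ofReal (|M.det|⁻¹ * (2 ^ d * ∏ i, u i)) := by
    rw [Measure.addHaar_preimage_linearMap volume hdet, volume_pi_pi]
    simp_rw [Real.volume_Ioo, sub_neg_eq_add, ← two_mul]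
    rw [← ENNReal.ofReal_prod_of_nonneg fun i _ => by linarith [hu i],
      ← ENNReal.ofReal_mul (by positivity), LinearMap.det_toLin', abs_inv,
      Finset.prod_mul_distrib, Finset.prod_const, Finset.card_univ, Fintype.card_fin]
  obtain ⟨x, hxA, hx0, hxbox⟩ := exists_ne_zero_mem_colLattice_of_volume_lt hA
    (S := Matrix.toLin' M ⁻¹' box)
    (fun x hx i _ => by
      simp only [box, Set.mem_preimage, Set.mem_univ_pi, Set.mem_Ioo, map_neg, Pi.neg_apply] at hx ⊢
      exact ⟨neg_lt_neg (hx i).2, by linarith [(hx i).1]⟩)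
    ((convex_pi fun i _ => convex_Ioo _ _).linear_preimage _)
    (by
      rw [hvol, ENNReal.ofReal_lt_ofReal_iff_of_nonneg (by positivity),
        lt_inv_mul_iff₀ (abs_pos.2 hM)]
      calc |M.det| * (2 ^ d * |A.det|) = 2 ^ d * (|A.det| * |M.det|) := by ring
        _ < 2 ^ d * ∏ i, u i := by gcongr)
  exact ⟨x, hxA, hx0, fun i => abs_lt.2 (hxbox i trivial)⟩

lemma det_one_updateRow (j : Fin d) (y : Fin d → ℝ) :
    ((1 : Matrix (Fin d) (Fin d) ℝ).updateRow j y).det = y j := by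
  have hy : y = ∑ k, y k • (1 : Matrix (Fin d) (Fin d) ℝ) k := by
    ext i
    simp [Matrix.one_apply]
  rw [hy, Matrix.det_updateRow_sum, Matrix.det_one, smul_eq_mul, mul_one, ← hy]

lemma exists_ne_zero_mem_colLattice_dotProduct_eq_zero (hA : A.det ≠ 0)
    {y : Fin d → ℝ} (hy : y ∈ dualLattice d (colLattice A)) {j : Fin d} (hyj : y j ≠ 0)
    {t : Fin d → ℝ} (ht : ∀ i ≠ j, 0 < t i)
    (h : |A.det| * |y j| < ∏ i ∈ Finset.univ.erase j, t i) :
    ∃ x ∈ colLattice A, x ≠ 0 ∧ (∀ i ≠ j, |x i| < t i) ∧ y ⬝ᵥ x = 0 := by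
  classical
  obtain ⟨x, hxA, hx0, hx⟩ := exists_ne_zero_mem_colLattice_abs_mulVec_lt hA
    (M := (1 : Matrix (Fin d) (Fin d) ℝ).updateRow j y) (u := Function.update t j 1)
    (by rwa [det_one_updateRow]) (fun i => by
      rcases eq_or_ne i j with rfl | hij
      · simp
      · simpa [hij] using ht i hij)
    (by rwa [det_one_updateRow, Finset.prod_update_of_mem (Finset.mem_univ j), one_mul,
      Finset.sdiff_singleton_eq_erase])
  simp only [Matrix.updateRow_mulVec, Matrix.one_mulVec] at hx
  refine ⟨x, hxA, hx0, fun i hij => by simpa [hij] using hx i, ?_⟩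
  obtain ⟨n, hn⟩ := hy x hxA
  have hn1 : |(n : ℝ)| < 1 := by simpa [← hn, dotProduct] using hx j
  rw [dotProduct, hn, Int.cast_eq_zero, ← Int.abs_lt_one_iff]
  exact_mod_cast hn1

lemma exists_ne_zero_mem_colLattice (hd : d ≠ 0) (hA : A.det ≠ 0) :
    ∃ x ∈ colLattice A, x ≠ 0 := by
  have hinj := Matrix.mulVec_injective_iff_isUnit.2 ((A.isUnit_iff_isUnit_det).2 hA.isUnit)
  refine ⟨A *ᵥ fun _ => ((1 : ℤ) : ℝ), ⟨fun _ => 1, rfl⟩, fun h => ?_⟩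
  rw [← A.mulVec_zero] at h
  simpa using congrFun (hinj h) ⟨0, Nat.pos_of_ne_zero hd⟩

lemma dualLattice_colLattice (hA : A.det ≠ 0) :
    dualLattice d (colLattice A) = colLattice (A⁻¹)ᵀ := by
  ext y
  constructor
  · intro hy
    choose n hn using fun i : Fin d => hy (A *ᵥ Pi.single i 1) ⟨Pi.single i 1, by
      congr 1; ext k; simp [Pi.single_apply]⟩
    have hyA : y ᵥ* A = fun i => (n i : ℝ) := by
      ext i
      rw [← hn i, ← dotProduct, Matrix.dotProduct_mulVec, dotProduct_single, mul_one]
    refine ⟨n, ?_⟩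
    rw [Matrix.mulVec_transpose, ← hyA, Matrix.vecMul_vecMul, Matrix.mul_nonsing_inv A hA.isUnit,
      Matrix.vecMul_one]
  · rintro ⟨z, rfl⟩ x ⟨w, rfl⟩
    refine ⟨z ⬝ᵥ w, ?_⟩
    rw [← dotProduct, Matrix.mulVec_transpose, Matrix.dotProduct_mulVec, Matrix.vecMul_vecMul,
      Matrix.nonsing_inv_mul A hA.isUnit, Matrix.vecMul_one]
    push_cast [dotProduct]
    rfl

lemma det_inv_transpose_ne_zero (hA : A.det ≠ 0) : ((A⁻¹)ᵀ).det ≠ 0 := by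
  rw [Matrix.det_transpose, Matrix.det_nonsing_inv, Ring.inverse_eq_inv']
  exact inv_ne_zero hA

lemma inv_transpose_inv_transpose (hA : A.det ≠ 0) : ((A⁻¹)ᵀ⁻¹)ᵀ = A := by
  rw [Matrix.transpose_nonsing_inv, Matrix.transpose_transpose,
    Matrix.nonsing_inv_nonsing_inv A hA.isUnit]

lemma exists_prod_abs_le_of_mem_dualLattice (hA : A.det ≠ 0) {y : Fin d → ℝ}
    (hy : y ∈ dualLattice d (colLattice A)) {b : Fin d → ℝ} (hb : ∀ i, 0 < b i)
    (hyb : ∀ i, |y i| ≤ b i) {j : Fin d} (hbj : b j = |y j|) {s : ℝ} (hs : 0 < s)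
    (hsb : s ^ (d - 1) = 2 * |A.det| * ∏ i, b i) :
    ∃ x ∈ colLattice A, x ≠ 0 ∧ ∏ i, |x i| ≤ 2 * (d - 1 : ℕ) * |A.det| * s := by
  have hyj : 0 < |y j| := hbj ▸ hb j
  have hcard : (Finset.univ.erase j).card = d - 1 := by simp
  let t : Fin d → ℝ := fun i => s / b i
  have hprod : ∏ i ∈ Finset.univ.erase j, t i = 2 * |A.det| * |y j| := by
    have hrest : 0 < ∏ i ∈ Finset.univ.erase j, b i := Finset.prod_pos fun i _ => hb i
    rw [Finset.prod_div_distrib, Finset.prod_const, hcard, hsb,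
      ← Finset.mul_prod_erase _ _ (Finset.mem_univ j), hbj]
    field_simp
  have hsum : ∑ i ∈ Finset.univ.erase j, |y i| * t i ≤ (d - 1 : ℕ) * s := by
    rw [← hcard, ← nsmul_eq_mul]
    refine Finset.sum_le_card_nsmul _ _ _ fun i _ => ?_
    rw [mul_div_left_comm]
    exact mul_le_of_le_one_right hs.le ((div_le_one (hb i)).2 (hyb i))
  obtain ⟨x, hxA, hx0, hxt, hxy⟩ := exists_ne_zero_mem_colLattice_dotProduct_eq_zero hA hy
    (abs_pos.1 hyj) (fun i _ => div_pos hs (hb i)) (by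
      rw [hprod]
      linarith [mul_pos (abs_pos.2 hA) hyj])
  refine ⟨x, hxA, hx0, ?_⟩
  calc ∏ i, |x i| ≤ (∏ i ∈ Finset.univ.erase j, t i) *
        ((∑ i ∈ Finset.univ.erase j, |y i| * t i) / |y j|) :=
        prod_abs_le_of_dotProduct_eq_zero (abs_pos.1 hyj) (fun i hi => (hxt i hi).le) hxy
    _ ≤ 2 * |A.det| * |y j| * ((d - 1 : ℕ) * s / |y j|) := by
        rw [hprod]
        gcongr
    _ = 2 * (d - 1 : ℕ) * |A.det| * s := by
        field_simp

lemma normMin_le_of_normMin_dualLattice_eq_zero (hd : 2 ≤ d) (hA : A.det ≠ 0)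
    (h0 : normMin d (dualLattice d (colLattice A)) = 0) {s : ℝ} (hs : 0 < s) :
    normMin d (colLattice A) ≤ 2 * (d - 1 : ℕ) * |A.det| * s := by
  have hd0 : d ≠ 0 := by omega
  have hd1 : d - 1 ≠ 0 := by omega
  rw [dualLattice_colLattice hA] at h0
  obtain ⟨y, hy, hy0, hyc⟩ := exists_prod_abs_lt_of_normMin_eq_zero hd0
    (exists_ne_zero_mem_colLattice hd0 (det_inv_transpose_ne_zero hA)) h0
    (c := s ^ (d - 1) / (2 * |A.det|)) (by positivity)
  obtain ⟨j, hyj⟩ := Function.ne_iff.1 hy0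
  obtain ⟨b, hb, hyb, hbj, hbc⟩ := exists_prod_lt_of_prod_abs_lt hyj hyc
  have hV : 0 < 2 * |A.det| * ∏ i, b i := by
    have := Finset.prod_pos fun i (_ : i ∈ Finset.univ) => hb i
    positivity
  set s' := (2 * |A.det| * ∏ i, b i) ^ ((d - 1 : ℕ) : ℝ)⁻¹
  have hs'b : s' ^ (d - 1) = 2 * |A.det| * ∏ i, b i := Real.rpow_inv_natCast_pow hV.le hd1
  have hs' : 0 < s' := by positivity
  have hs's : s' < s := by
    rw [← pow_lt_pow_iff_left₀ hs'.le hs.le hd1, hs'b, ← lt_div_iff₀' (by positivity)]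
    exact hbc
  obtain ⟨x, hxA, hx0, hx⟩ := exists_prod_abs_le_of_mem_dualLattice hA
    (by rwa [dualLattice_colLattice hA]) hb hyb hbj hs' hs'b
  calc normMin d (colLattice A) ≤ ∏ i, |x i| := normMin_le_prod_abs hd0 hxA hx0
    _ ≤ 2 * (d - 1 : ℕ) * |A.det| * s' := hx
    _ ≤ 2 * (d - 1 : ℕ) * |A.det| * s := by gcongr

lemma normMin_dualLattice_pos_of_normMin_pos (hd : 2 ≤ d) (hA : A.det ≠ 0)
    (h : 0 < normMin d (colLattice A)) : 0 < normMin d (dualLattice d (colLattice A)) := by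
  refine (normMin_nonneg _).lt_of_ne fun h0 => h.ne' ?_
  refine le_antisymm (le_of_forall_gt_imp_ge_of_dense fun ε hε => ?_) (normMin_nonneg _)
  have hC : (0 : ℝ) < 2 * (d - 1 : ℕ) * |A.det| := by
    have : (0 : ℝ) < (d - 1 : ℕ) := by norm_cast; omega
    positivity
  calc normMin d (colLattice A) ≤ 2 * (d - 1 : ℕ) * |A.det| * (ε / (2 * (d - 1 : ℕ) * |A.det|)) :=
        normMin_le_of_normMin_dualLattice_eq_zero hd hA h0.symm (by positivity)
    _ = ε := mul_div_cancel₀ ε hC.ne'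

end ColLattice

/-- For a full-rank lattice `Λ ⊆ ℝ^d` (`d ≥ 2`): `N(Λ) > 0` iff `N(Λ*) > 0`. -/
theorem stmt_15 (d : ℕ) (hd : 2 ≤ d) (Λ : Set (Fin d → ℝ)) (hΛ : IsFullLattice d Λ) :
    0 < normMin d Λ ↔ 0 < normMin d (dualLattice d Λ) := by
  obtain ⟨A, hA, rfl⟩ := hΛ
  have hB := det_inv_transpose_ne_zero hA
  refine ⟨normMin_dualLattice_pos_of_normMin_pos hd hA, fun h => ?_⟩
  have := normMin_dualLattice_pos_of_normMin_pos hd hB (by rwa [← dualLattice_colLattice hA])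
  rwa [dualLattice_colLattice hB, inv_transpose_inv_transpose hA] at this

end
end
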